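/- Let N : ℝ² → ℝ be three times continuously differentiable and define G⁰(y) := u²·N(s(y), z(y)) on ℝ × (ℝⁿ∖{0}). Then for every y with ȳ ≠ 0 and every 1 ≤ l ≤ n, ∂³G⁰/∂y⁰∂y⁰∂y^l(y) = (1/u)·[N_szz(s,z)·x^l + Ψ(N_zz)(s,z)·u_l], where (s,z) = (s(y), z(y)). (This is the component B⁰₀₀ₗ of the Berwald curvature formula of Theorem 3.1.) -/

import Mathlib

/-!
Along the coordinate line of `yˡ` the quantities `u`, `s`, `z` have derivatives `yˡ/u`,
`(u xˡ - s yˡ)/u²` and `-z yˡ/u²`, so `∂G⁰/∂yˡ = φ(y⁰/u)` with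
`φ(z) = 2 yˡ N + (u xˡ - s yˡ) N_s - yˡ z N_z`, all at `(s, z)`. In the Euler-type combination
`2N - z N_z` the second derivatives cancel, `(2N - z N_z)'' = -z N_zzz`, hence
`∂²/∂(y⁰)² (φ(y⁰/u)) = ((u xˡ - s yˡ) N_szz - yˡ z N_zzz)/u²`, and Schwarz's theorem
`N_szz = N_zzs` turns this into the stated formula.
-/

open Finset

/-- The operator `Ψ(Θ)(s,z) = -s·Θ_s(s,z) - z·Θ_z(s,z)`. -/
noncomputable def Psi (Θ : ℝ → ℝ → ℝ) (s z : ℝ) : ℝ :=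
  -s * deriv (fun s' => Θ s' z) s - z * deriv (fun z' => Θ s z') z

/-- `u = |ȳ|`, the Euclidean norm of `ȳ`. -/
noncomputable def uNorm {n : ℕ} (yb : Fin n → ℝ) : ℝ := Real.sqrt (∑ i, yb i ^ 2)

/-- `s(y) = ⟨x̄, ȳ⟩ / |ȳ|`. -/
noncomputable def sVar {n : ℕ} (xb yb : Fin n → ℝ) : ℝ := (∑ i, xb i * yb i) / uNorm yb

/-- `z(y) = y⁰ / |ȳ|`. -/
noncomputable def zVar {n : ℕ} (y0 : ℝ) (yb : Fin n → ℝ) : ℝ := y0 / uNorm yb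

/-- The spray coefficient `G⁰(y) = u²·N(s(y), z(y))`. -/
noncomputable def G0 {n : ℕ} (xb : Fin n → ℝ) (N : ℝ → ℝ → ℝ) (y0 : ℝ) (yb : Fin n → ℝ) : ℝ :=
  uNorm yb ^ 2 * N (sVar xb yb) (zVar y0 yb)

open Function

noncomputable def partialFst (N : ℝ → ℝ → ℝ) (s z : ℝ) : ℝ :=
  deriv (fun s' => N s' z) s

noncomputable def partialSnd (N : ℝ → ℝ → ℝ) (s z : ℝ) : ℝ :=
  deriv (N s) z

section Partial

variable {N : ℝ → ℝ → ℝ}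

lemma partialFst_eq_fderiv {s z : ℝ} (hN : DifferentiableAt ℝ (uncurry N) (s, z)) :
    partialFst N s z = fderiv ℝ (uncurry N) (s, z) (1, 0) := by
  have h : HasDerivAt (fun s' => N s' z) (fderiv ℝ (uncurry N) (s, z) (1, 0)) s :=
    hN.hasFDerivAt.comp_hasDerivAt (f := fun s' => (s', z)) s
      ((hasDerivAt_id' s).prodMk (hasDerivAt_const s z))
  exact h.deriv

lemma partialSnd_eq_fderiv {s z : ℝ} (hN : DifferentiableAt ℝ (uncurry N) (s, z)) :
    partialSnd N s z = fderiv ℝ (uncurry N) (s, z) (0, 1) := by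
  have h : HasDerivAt (N s) (fderiv ℝ (uncurry N) (s, z) (0, 1)) z :=
    hN.hasFDerivAt.comp_hasDerivAt (f := fun z' => (s, z')) z
      ((hasDerivAt_const z s).prodMk (hasDerivAt_id' z))
  exact h.deriv

lemma HasDerivAt.uncurry_comp {a b : ℝ → ℝ} {a' b' t : ℝ}
    (hN : DifferentiableAt ℝ (uncurry N) (a t, b t)) (ha : HasDerivAt a a' t)
    (hb : HasDerivAt b b' t) :
    HasDerivAt (fun t => N (a t) (b t))
      (a' * partialFst N (a t) (b t) + b' * partialSnd N (a t) (b t)) t := by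
  have hab : ((a', b') : ℝ × ℝ) = a' • (1, 0) + b' • (0, 1) := by simp
  refine (hN.hasFDerivAt.comp_hasDerivAt t (ha.prodMk hb)).congr_deriv ?_
  rw [partialFst_eq_fderiv hN, partialSnd_eq_fderiv hN, hab, map_add, map_smul, map_smul,
    smul_eq_mul, smul_eq_mul]

lemma uncurry_partialFst (hN : Differentiable ℝ (uncurry N)) :
    uncurry (partialFst N) = fun p => fderiv ℝ (uncurry N) p (1, 0) :=
  funext fun p => partialFst_eq_fderiv (hN p)

lemma uncurry_partialSnd (hN : Differentiable ℝ (uncurry N)) :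
    uncurry (partialSnd N) = fun p => fderiv ℝ (uncurry N) p (0, 1) :=
  funext fun p => partialSnd_eq_fderiv (hN p)

lemma ContDiff.uncurry_partialFst {k : WithTop ℕ∞} (hN : ContDiff ℝ (k + 1) (uncurry N)) :
    ContDiff ℝ k (uncurry (partialFst N)) := by
  rw [_root_.uncurry_partialFst (hN.differentiable (by simp))]
  exact (hN.fderiv_right le_rfl).clm_apply contDiff_const

lemma ContDiff.uncurry_partialSnd {k : WithTop ℕ∞} (hN : ContDiff ℝ (k + 1) (uncurry N)) :
    ContDiff ℝ k (uncurry (partialSnd N)) := by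
  rw [_root_.uncurry_partialSnd (hN.differentiable (by simp))]
  exact (hN.fderiv_right le_rfl).clm_apply contDiff_const

lemma ContDiff.of_uncurry_left {k : WithTop ℕ∞} (hN : ContDiff ℝ k (uncurry N)) (s : ℝ) :
    ContDiff ℝ k (N s) :=
  hN.comp (contDiff_const.prodMk contDiff_id)

lemma partialSnd_partialFst (hN : ContDiff ℝ 2 (uncurry N)) :
    partialSnd (partialFst N) = partialFst (partialSnd N) := by
  have hd : Differentiable ℝ (uncurry N) := hN.differentiable (by norm_num)
  have hdd : Differentiable ℝ (fderiv ℝ (uncurry N)) :=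
    (hN.fderiv_right (m := 1) (by norm_num)).differentiable one_ne_zero
  have hpartial : ∀ v p, fderiv ℝ (fun q => fderiv ℝ (uncurry N) q v) p
      = fun w => fderiv ℝ (fderiv ℝ (uncurry N)) p w v := fun v p => by
    ext w
    rw [fderiv_clm_apply (hdd p) (differentiableAt_const v)]
    simp
  funext s z
  rw [partialSnd_eq_fderiv ((hN.uncurry_partialFst (k := 1)).differentiable one_ne_zero _),
    partialFst_eq_fderiv ((hN.uncurry_partialSnd (k := 1)).differentiable one_ne_zero _),
    _root_.uncurry_partialFst hd, _root_.uncurry_partialSnd hd, hpartial, hpartial]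
  exact (hN.contDiffAt.isSymmSndFDerivAt (by simp)) _ _

lemma partialSnd_partialSnd_partialFst (hN : ContDiff ℝ 3 (uncurry N)) :
    partialSnd (partialSnd (partialFst N)) = partialFst (partialSnd (partialSnd N)) := by
  rw [partialSnd_partialFst (hN.of_le (by norm_num)),
    partialSnd_partialFst (hN.uncurry_partialSnd (k := 2))]

end Partial

lemma iterate_deriv_two_comp_div_const (φ : ℝ → ℝ) (u t : ℝ) :
    deriv^[2] (fun t => φ (t / u)) t = deriv^[2] φ (t / u) / u ^ 2 := by
  have hscale (g : ℝ → ℝ) : deriv (fun t => g (t / u)) = fun t => u⁻¹ * deriv g (t / u) :=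
    funext fun t => by
      simpa only [div_eq_inv_mul, smul_eq_mul] using deriv_comp_mul_left u⁻¹ g t
  simp only [iterate_succ, iterate_zero, comp_apply, id, hscale, deriv_const_mul_field']
  ring

lemma iterate_deriv_two_mul_add_mul_sub_mul_deriv {f g : ℝ → ℝ} (hf : ContDiff ℝ 3 f)
    (hg : ContDiff ℝ 2 g) (a c z : ℝ) :
    deriv^[2] (fun z => 2 * a * f z + c * g z - a * z * deriv f z) z
      = c * deriv^[2] g z - a * z * deriv^[3] f z := by
  have hf₁ : Differentiable ℝ f := hf.differentiable (by norm_num)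
  have hf₂ : Differentiable ℝ (deriv f) := (hf.deriv' (n := 2)).differentiable (by norm_num)
  have hf₃ : Differentiable ℝ (deriv^[2] f) :=
    (hf.iterate_deriv' 1 2).differentiable (by norm_num)
  have hg₁ : Differentiable ℝ g := hg.differentiable (by norm_num)
  have hg₂ : Differentiable ℝ (deriv g) := (hg.deriv' (n := 1)).differentiable (by norm_num)
  have hfirst : deriv (fun z => 2 * a * f z + c * g z - a * z * deriv f z)
      = fun z => a * deriv f z + c * deriv g z - a * z * deriv^[2] f z := funext fun z => by
    have h := (((hf₁ z).hasDerivAt.const_mul (2 * a)).fun_add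
      ((hg₁ z).hasDerivAt.const_mul c)).fun_sub
      (((hasDerivAt_id' z).const_mul a).fun_mul (hf₂ z).hasDerivAt)
    rw [h.deriv]
    simp only [iterate_succ, iterate_zero, comp_apply, id]
    ring
  have h := (((hf₂ z).hasDerivAt.const_mul a).fun_add ((hg₂ z).hasDerivAt.const_mul c)).fun_sub
    (((hasDerivAt_id' z).const_mul a).fun_mul (hf₃ z).hasDerivAt)
  rw [iterate_succ_apply, iterate_one, hfirst, h.deriv]
  simp only [iterate_succ, iterate_zero, comp_apply, id]
  ring

lemma hasDerivAt_sum_update {ι : Type*} [Fintype ι] [DecidableEq ι] (g : ι → ℝ → ℝ)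
    (y : ι → ℝ) (l : ι) {d t : ℝ} (hg : HasDerivAt (g l) d t) :
    HasDerivAt (fun t => ∑ i, g i (update y l t i)) d t := by
  have hsplit : (fun t => ∑ i, g i (update y l t i))
      = fun t => g l t + ∑ i ∈ univ \ {l}, g i (y i) := funext fun t => by
    simp only [apply_update g y l t]
    exact sum_update_of_mem (mem_univ l) _ _
  rw [hsplit]
  exact hg.add_const _

section Coordinates

variable {n : ℕ} {yb : Fin n → ℝ}

lemma sq_uNorm (yb : Fin n → ℝ) : uNorm yb ^ 2 = ∑ i, yb i ^ 2 :=
  Real.sq_sqrt (sum_nonneg fun i _ => sq_nonneg (yb i))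

lemma uNorm_pos (hyb : yb ≠ 0) : 0 < uNorm yb := by
  obtain ⟨j, hj⟩ := Function.ne_iff.mp hyb
  exact Real.sqrt_pos.mpr
    (sum_pos' (fun i _ => sq_nonneg (yb i)) ⟨j, mem_univ j, sq_pos_of_ne_zero hj⟩)

lemma hasDerivAt_uNorm_update (hyb : yb ≠ 0) (l : Fin n) :
    HasDerivAt (fun t => uNorm (update yb l t)) (yb l / uNorm yb) (yb l) := by
  have hsum := hasDerivAt_sum_update (fun _ x => x ^ 2) yb l (hasDerivAt_pow 2 (yb l))
  have h := hsum.sqrt (by simpa [← sq_uNorm] using (uNorm_pos hyb).ne')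
  refine h.congr_deriv ?_
  simp only [update_eq_self]
  rw [← uNorm]
  field_simp
  ring

lemma hasDerivAt_sVar_update (xb : Fin n → ℝ) (hyb : yb ≠ 0) (l : Fin n) :
    HasDerivAt (fun t => sVar xb (update yb l t))
      ((uNorm yb * xb l - sVar xb yb * yb l) / uNorm yb ^ 2) (yb l) := by
  have hinner := hasDerivAt_sum_update (fun i x => xb i * x) yb l
    ((hasDerivAt_id' (yb l)).const_mul (xb l))
  have h := hinner.div (hasDerivAt_uNorm_update hyb l) (by simpa using (uNorm_pos hyb).ne')
  refine h.congr_deriv ?_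
  have hu := (uNorm_pos hyb).ne'
  simp only [update_eq_self, sVar]
  field_simp

lemma hasDerivAt_zVar_update (y0 : ℝ) (hyb : yb ≠ 0) (l : Fin n) :
    HasDerivAt (fun t => zVar y0 (update yb l t))
      (-(zVar y0 yb * yb l) / uNorm yb ^ 2) (yb l) := by
  have h := (hasDerivAt_const (yb l) y0).div (hasDerivAt_uNorm_update hyb l)
    (by simpa using (uNorm_pos hyb).ne')
  refine h.congr_deriv ?_
  have hu := (uNorm_pos hyb).ne'
  simp only [update_eq_self, zVar]
  field_simp
  ring

end Coordinates

lemma hasDerivAt_G0_update {n : ℕ} (xb : Fin n → ℝ) {N : ℝ → ℝ → ℝ} (y0 : ℝ)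
    {yb : Fin n → ℝ} (hN : DifferentiableAt ℝ (uncurry N) (sVar xb yb, zVar y0 yb))
    (hyb : yb ≠ 0) (l : Fin n) :
    HasDerivAt (fun t => G0 xb N y0 (update yb l t))
      (2 * yb l * N (sVar xb yb) (zVar y0 yb)
        + (uNorm yb * xb l - sVar xb yb * yb l) * partialFst N (sVar xb yb) (zVar y0 yb)
        - yb l * zVar y0 yb * partialSnd N (sVar xb yb) (zVar y0 yb)) (yb l) := by
  have hNcomp := HasDerivAt.uncurry_comp (by simpa using hN)
    (hasDerivAt_sVar_update xb hyb l) (hasDerivAt_zVar_update y0 hyb l)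
  have h := ((hasDerivAt_uNorm_update hyb l).pow 2).mul hNcomp
  refine h.congr_deriv ?_
  have hu := (uNorm_pos hyb).ne'
  simp only [update_eq_self, Pi.pow_apply]
  field_simp
  ring

theorem stmt_9_general (n : ℕ) (xb : Fin n → ℝ)
    (N : ℝ → ℝ → ℝ) (hN : ContDiff ℝ 3 (Function.uncurry N))
    (y0 : ℝ) (yb : Fin n → ℝ) (hyb : yb ≠ 0) (l : Fin n) :
    deriv^[2]
        (fun t => deriv (fun t' => G0 xb N t (Function.update yb l t')) (yb l)) y0
      = (1 / uNorm yb) *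
          (deriv (fun s' => deriv^[2] (N s') (zVar y0 yb)) (sVar xb yb) * xb l
            + Psi (fun s z => deriv^[2] (N s) z) (sVar xb yb) (zVar y0 yb) *
                (yb l / uNorm yb)) := by
  set u := uNorm yb
  set s := sVar xb yb
  have hu : u ≠ 0 := (uNorm_pos hyb).ne'
  set φ := fun z => 2 * yb l * N s z + (u * xb l - s * yb l) * partialFst N s z
    - yb l * z * deriv (N s) z
  have hG0 : (fun t => deriv (fun t' => G0 xb N t (update yb l t')) (yb l))
      = fun t => φ (t / u) :=
    funext fun t => (hasDerivAt_G0_update xb t (hN.differentiable (by norm_num) _) hyb l).deriv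
  have hmixed : deriv^[2] (partialFst N s) (y0 / u)
      = deriv (fun s' => deriv^[2] (N s') (y0 / u)) s :=
    congrFun (congrFun (partialSnd_partialSnd_partialFst hN) s) (y0 / u)
  calc deriv^[2] (fun t => deriv (fun t' => G0 xb N t (update yb l t')) (yb l)) y0
      = deriv^[2] φ (y0 / u) / u ^ 2 := by rw [hG0, iterate_deriv_two_comp_div_const]
    _ = ((u * xb l - s * yb l) * deriv^[2] (partialFst N s) (y0 / u)
          - yb l * (y0 / u) * deriv^[3] (N s) (y0 / u)) / u ^ 2 :=
      congrArg (· / u ^ 2) (iterate_deriv_two_mul_add_mul_sub_mul_deriv (hN.of_uncurry_left s)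
        ((hN.uncurry_partialFst (k := 2)).of_uncurry_left s) _ _ _)
    _ = _ := by
      have hz : zVar y0 yb = y0 / u := rfl
      rw [hmixed, iterate_succ_apply' deriv 2 (N s), Psi, hz]
      field_simp
      ring

theorem stmt_9 (n : ℕ) (hn : 2 ≤ n) (xb : Fin n → ℝ)
    (N : ℝ → ℝ → ℝ) (hN : ContDiff ℝ 3 (Function.uncurry N))
    (y0 : ℝ) (yb : Fin n → ℝ) (hyb : yb ≠ 0) (l : Fin n) :
    deriv^[2]
        (fun t => deriv (fun t' => G0 xb N t (Function.update yb l t')) (yb l)) y0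
      = (1 / uNorm yb) *
          (deriv (fun s' => deriv^[2] (N s') (zVar y0 yb)) (sVar xb yb) * xb l
            + Psi (fun s z => deriv^[2] (N s) z) (sVar xb yb) (zVar y0 yb) *
                (yb l / uNorm yb)) :=
  stmt_9_general n xb N hN y0 yb hyb l
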